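/- For every natural number k, ∫_0^∞ u^k · u^{-ln u} · sin(2π ln u) du = 0. -/

import Mathlib

/-!
After the substitution `u = eˣ` the integral becomes `∫ e^{(k+1)x - x²} sin(2πx) dx` over `ℝ`.
The Gaussian factor is invariant under the reflection `x ↦ (k+1) - x`, which changes the sign of
`sin(2πx)` because `k+1` is an integer, so the integral equals its own negative.
-/

open Real MeasureTheory

theorem MeasureTheory.integral_eq_zero_of_comp_sub_left_eq_neg {G E : Type*} [MeasurableSpace G]
    [NormedAddCommGroup E] [NormedSpace ℝ E] [AddGroup G] [MeasurableAdd G] [MeasurableNeg G]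
    (μ : Measure G) [μ.IsNegInvariant] [μ.IsAddLeftInvariant] {f : G → E} (a : G)
    (hf : ∀ x, f (a - x) = -f x) : ∫ x, f x ∂μ = 0 := by
  have h := integral_sub_left_eq_self f μ a
  simp only [hf, integral_neg] at h
  have h2 : (2 : ℝ) • ∫ x, f x ∂μ = 0 := by
    rw [two_smul]
    nth_rw 1 [← h]
    exact neg_add_cancel _
  simpa using h2

theorem Real.integral_exp_smul_comp_exp {E : Type*} [NormedAddCommGroup E] [NormedSpace ℝ E]
    (g : ℝ → E) : ∫ x, exp x • g (exp x) = ∫ y in Set.Ioi 0, g y := by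
  rw [← range_exp, ← Set.image_univ,
    integral_image_eq_integral_abs_deriv_smul MeasurableSet.univ
      (fun x _ ↦ (hasDerivAt_exp x).hasDerivWithinAt) exp_injective.injOn,
    Measure.restrict_univ]
  simp only [abs_of_pos (exp_pos _)]

theorem exp_smul_stieltjes_integrand_comp_exp (k : ℕ) (x : ℝ) :
    exp x • (exp x ^ k * exp x ^ (-log (exp x)) * sin (2 * π * log (exp x)))
      = exp ((k + 1) * x - x ^ 2) * sin (2 * π * x) := by
  rw [log_exp, rpow_def_of_pos (exp_pos x), log_exp, ← exp_nat_mul, smul_eq_mul,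
    ← mul_assoc, ← mul_assoc, ← exp_add, ← exp_add]
  congr 2
  ring

theorem stieltjes_vanishing_lemma (k : ℕ) :
    (∫ u in Set.Ioi (0 : ℝ),
        u ^ k * u ^ (-Real.log u) * Real.sin (2 * π * Real.log u)) = 0 := by
  rw [← integral_exp_smul_comp_exp]
  simp only [exp_smul_stieltjes_integrand_comp_exp]
  refine integral_eq_zero_of_comp_sub_left_eq_neg volume ((k : ℝ) + 1) fun x ↦ ?_
  have hgauss : (k + 1) * ((k + 1) - x) - ((k + 1) - x) ^ 2 = (k + 1) * x - x ^ 2 := by ring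
  have hsin : sin (2 * π * ((k + 1) - x)) = -sin (2 * π * x) := by
    rw [mul_sub, show 2 * π * ((k : ℝ) + 1) = ((k + 1 : ℕ) : ℝ) * (2 * π) by push_cast; ring,
      sin_nat_mul_two_pi_sub]
  rw [hgauss, hsin, mul_neg]
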